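/- arXiv:1103.2213 — 5 statements merged into one kernel-verified Lean document; each statement's English description precedes it below -/
import Mathlib

section
/- For β > 0 and x ∈ ℝⁿ, the proximity operator of β f₁ (the scaled Poisson negative log-likelihood with counts y, yᵢ ≥ 0) is given coordinate-wise by (prox_{βf₁} x)ᵢ = (xᵢ − β + √((xᵢ − β)² + 4βyᵢ))/2. -/
/-!
The objective `Φ z = β f₁ z + ‖x - z‖² / 2` is separable. In each coordinate the proposed point
`p` is the nonnegative root of `p (p + β - x) = β a`, which says exactly that `(x - p) / β` is a
subgradient of the scalar Poisson term at `p` (for `a > 0` this is `log t - log p ≤ (t - p) / p`).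
Completing the square turns the subgradient inequality into the quadratic growth bound
`Φ p + ‖z - p‖² / 2 ≤ Φ z`, which gives both minimality and uniqueness since `Φ p` is finite.
-/

/-- The scalar Poisson data-fidelity term with count `a ≥ 0`. -/
noncomputable def fPoisson (a t : ℝ) : EReal :=
  if 0 < a then (if 0 < t then ((-a * Real.log t + t : ℝ) : EReal) else ⊤)
  else (if 0 ≤ t then ((t : ℝ) : EReal) else ⊤)

open Finset

namespace EReal

lemma coe_finset_sum {ι : Type*} (s : Finset ι) (f : ι → ℝ) :
    ((∑ i ∈ s, f i : ℝ) : EReal) = ∑ i ∈ s, (f i : EReal) :=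
  map_sum ({ toFun := Real.toEReal, map_zero' := coe_zero, map_add' := coe_add } : ℝ →+ EReal) f s

lemma coe_mul_finset_sum {ι : Type*} {β : ℝ} (hβ : 0 ≤ β) (s : Finset ι) (f : ι → EReal) :
    (β : EReal) * ∑ i ∈ s, f i = ∑ i ∈ s, (β : EReal) * f i :=
  map_sum
    ({ toFun := fun e => (β : EReal) * e
       map_zero' := mul_zero _
       map_add' := left_distrib_of_nonneg_of_ne_top (EReal.coe_nonneg.mpr hβ) (coe_ne_top β) } :
      EReal →+ EReal) f s

end EReal

lemma unique_minimizer_of_add_sq_norm_sub_le {E : Type*} [NormedAddCommGroup E] {Φ : E → EReal}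
    {p : E} {r : ℝ} (hp : Φ p = r) (h : ∀ z, Φ p + ((‖z - p‖ ^ 2 / 2 : ℝ) : EReal) ≤ Φ z) :
    (∀ z, Φ p ≤ Φ z) ∧ ∀ q, (∀ z, Φ q ≤ Φ z) → q = p := by
  refine ⟨fun z => le_trans ?_ (h z), fun q hq => ?_⟩
  · exact le_add_of_nonneg_right (EReal.coe_nonneg.mpr (by positivity))
  · have hle := (h q).trans (hq p)
    rw [hp, ← EReal.coe_add, EReal.coe_le_coe_iff] at hle
    have hnorm : ‖q - p‖ = 0 := by nlinarith [norm_nonneg (q - p)]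
    exact sub_eq_zero.mp (norm_eq_zero.mp hnorm)

noncomputable def poissonProx (a β x : ℝ) : ℝ :=
  (x - β + Real.sqrt ((x - β) ^ 2 + 4 * β * a)) / 2

lemma abs_le_sqrt_sq_add {u c : ℝ} (hc : 0 ≤ c) : |u| ≤ Real.sqrt (u ^ 2 + c) :=
  Real.abs_le_sqrt (by linarith)

lemma abs_lt_sqrt_sq_add {u c : ℝ} (hc : 0 < c) : |u| < Real.sqrt (u ^ 2 + c) :=
  Real.lt_sqrt (abs_nonneg u) |>.mpr (by rw [sq_abs]; linarith)

section poissonProx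

variable {a β x : ℝ}

lemma poissonProx_mul_add_sub (h : 0 ≤ β * a) :
    poissonProx a β x * (poissonProx a β x + β - x) = β * a := by
  have hsq := Real.sq_sqrt (show 0 ≤ (x - β) ^ 2 + 4 * β * a by nlinarith [sq_nonneg (x - β)])
  unfold poissonProx
  linear_combination hsq / 4

lemma sub_le_poissonProx (h : 0 ≤ β * a) : x - β ≤ poissonProx a β x := by
  unfold poissonProx
  linarith [le_abs_self (x - β), abs_le_sqrt_sq_add (u := x - β) (by linarith : 0 ≤ 4 * β * a)]

lemma poissonProx_nonneg (h : 0 ≤ β * a) : 0 ≤ poissonProx a β x := by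
  unfold poissonProx
  linarith [neg_le_abs (x - β), abs_le_sqrt_sq_add (u := x - β) (by linarith : 0 ≤ 4 * β * a)]

lemma poissonProx_pos (h : 0 < β * a) : 0 < poissonProx a β x := by
  unfold poissonProx
  linarith [neg_le_abs (x - β), abs_lt_sqrt_sq_add (u := x - β) (by linarith : 0 < 4 * β * a)]

end poissonProx

section fPoisson

variable {a β x : ℝ}

lemma fPoisson_poissonProx_eq_coe (ha : 0 ≤ a) (hβ : 0 < β) :
    ∃ r : ℝ, fPoisson a (poissonProx a β x) = r := by
  unfold fPoisson
  rcases ha.lt_or_eq with ha | rfl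
  · rw [if_pos ha, if_pos (poissonProx_pos (mul_pos hβ ha))]
    exact ⟨_, rfl⟩
  · rw [if_neg (lt_irrefl 0), if_pos (poissonProx_nonneg (by simp))]
    exact ⟨_, rfl⟩

lemma coe_mul_fPoisson_poissonProx_add_le (ha : 0 ≤ a) (hβ : 0 < β) (t : ℝ) :
    (β : EReal) * fPoisson a (poissonProx a β x)
        + (((x - poissonProx a β x) * (t - poissonProx a β x) : ℝ) : EReal)
      ≤ β * fPoisson a t := by
  set p := poissonProx a β x
  have hroot : p * (p + β - x) = β * a := poissonProx_mul_add_sub (mul_nonneg hβ.le ha)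
  have hp : x - β ≤ p := sub_le_poissonProx (mul_nonneg hβ.le ha)
  unfold fPoisson
  rcases ha.lt_or_eq with ha | rfl
  · have hp0 : 0 < p := poissonProx_pos (mul_pos hβ ha)
    rw [if_pos ha, if_pos ha, if_pos hp0]
    split_ifs with ht
    · rw [← EReal.coe_mul, ← EReal.coe_mul, ← EReal.coe_add, EReal.coe_le_coe_iff]
      have hlog : Real.log t - Real.log p ≤ (t - p) / p := by
        rw [← Real.log_div ht.ne' hp0.ne']
        calc Real.log (t / p) ≤ t / p - 1 := Real.log_le_sub_one_of_pos (div_pos ht hp0)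
          _ = (t - p) / p := by field_simp
      have hsub : β * a * (Real.log t - Real.log p) ≤ (p + β - x) * (t - p) :=
        calc β * a * (Real.log t - Real.log p) ≤ β * a * ((t - p) / p) :=
              mul_le_mul_of_nonneg_left hlog (by positivity)
          _ = (p + β - x) * (t - p) := by rw [← hroot]; field_simp
      linarith
    · rw [EReal.mul_top_of_pos (EReal.coe_pos.mpr hβ)]
      exact le_top
  · have hp0 : 0 ≤ p := poissonProx_nonneg (by simp)
    simp only [lt_irrefl, if_false, if_pos hp0]
    split_ifs with ht
    · rw [← EReal.coe_mul, ← EReal.coe_mul, ← EReal.coe_add, EReal.coe_le_coe_iff]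
      rcases mul_eq_zero.mp (hroot.trans (mul_zero β)) with hp_zero | hp_root <;> nlinarith
    · rw [EReal.mul_top_of_pos (EReal.coe_pos.mpr hβ)]
      exact le_top

lemma coe_mul_fPoisson_poissonProx_add_sq_le (ha : 0 ≤ a) (hβ : 0 < β) (t : ℝ) :
    (β : EReal) * fPoisson a (poissonProx a β x)
        + (((x - poissonProx a β x) ^ 2 / 2 + (t - poissonProx a β x) ^ 2 / 2 : ℝ) : EReal)
      ≤ β * fPoisson a t + (((x - t) ^ 2 / 2 : ℝ) : EReal) := by
  set p := poissonProx a β x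
  calc (β : EReal) * fPoisson a p + (((x - p) ^ 2 / 2 + (t - p) ^ 2 / 2 : ℝ) : EReal)
      = β * fPoisson a p + (((x - p) * (t - p) : ℝ) : EReal) + (((x - t) ^ 2 / 2 : ℝ) : EReal) := by
        rw [add_assoc, ← EReal.coe_add]
        congr 2
        ring
    _ ≤ β * fPoisson a t + (((x - t) ^ 2 / 2 : ℝ) : EReal) :=
        add_le_add (coe_mul_fPoisson_poissonProx_add_le ha hβ t) le_rfl

end fPoisson

section poissonObjective

variable {ι : Type*} [Fintype ι] (y : EuclideanSpace ℝ ι) (β : ℝ) (x : EuclideanSpace ℝ ι)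

noncomputable def poissonObjective (z : EuclideanSpace ℝ ι) : EReal :=
  (β : EReal) * (∑ i, fPoisson (y i) (z i)) + ((‖x - z‖ ^ 2 / 2 : ℝ) : EReal)

noncomputable def poissonProxVec : EuclideanSpace ℝ ι :=
  WithLp.toLp 2 fun i => poissonProx (y i) β (x i)

variable {y β}

lemma poissonObjective_eq_sum (hβ : 0 ≤ β) (z : EuclideanSpace ℝ ι) :
    poissonObjective y β x z
      = ∑ i, ((β : EReal) * fPoisson (y i) (z i) + (((x i - z i) ^ 2 / 2 : ℝ) : EReal)) := by
  rw [poissonObjective, EReal.coe_mul_finset_sum hβ, EuclideanSpace.real_norm_sq_eq, sum_div,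
    EReal.coe_finset_sum, ← sum_add_distrib]
  simp only [PiLp.sub_apply]

lemma poissonObjective_poissonProxVec_eq_coe (hy : ∀ i, 0 ≤ y i) (hβ : 0 < β) :
    ∃ r : ℝ, poissonObjective y β x (poissonProxVec y β x) = r := by
  choose r hr using fun i => fPoisson_poissonProx_eq_coe (x := x i) (hy i) hβ
  refine ⟨∑ i, (β * r i + (x i - poissonProx (y i) β (x i)) ^ 2 / 2), ?_⟩
  rw [poissonObjective_eq_sum x hβ.le, EReal.coe_finset_sum]
  refine sum_congr rfl fun i _ => ?_
  simp only [poissonProxVec, PiLp.toLp_apply, hr, EReal.coe_add, EReal.coe_mul]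

lemma poissonObjective_poissonProxVec_add_sq_le (hy : ∀ i, 0 ≤ y i) (hβ : 0 < β)
    (z : EuclideanSpace ℝ ι) :
    poissonObjective y β x (poissonProxVec y β x)
        + ((‖z - poissonProxVec y β x‖ ^ 2 / 2 : ℝ) : EReal)
      ≤ poissonObjective y β x z := by
  rw [poissonObjective_eq_sum x hβ.le, poissonObjective_eq_sum x hβ.le,
    EuclideanSpace.real_norm_sq_eq, sum_div, EReal.coe_finset_sum, ← sum_add_distrib]
  refine sum_le_sum fun i _ => ?_
  simp only [poissonProxVec, PiLp.sub_apply, PiLp.toLp_apply, add_assoc, ← EReal.coe_add]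
  exact coe_mul_fPoisson_poissonProx_add_sq_le (hy i) hβ (z i)

end poissonObjective

/-- For `β > 0`, the proximity operator of `β f₁` (scaled Poisson negative
log-likelihood) is given coordinatewise by
`(prox_{βf₁} x)ᵢ = (xᵢ − β + √((xᵢ − β)² + 4βyᵢ))/2`. -/
theorem prox_poisson_fidelity
    {n : ℕ} (y : EuclideanSpace ℝ (Fin n)) (hy : ∀ i, 0 ≤ y i)
    (β : ℝ) (hβ : 0 < β) (x : EuclideanSpace ℝ (Fin n)) :
    let p : EuclideanSpace ℝ (Fin n) :=
      WithLp.toLp 2 (fun i => (x i - β + Real.sqrt ((x i - β) ^ 2 + 4 * β * y i)) / 2 : Fin n → ℝ)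
    (∀ z : EuclideanSpace ℝ (Fin n),
        (β : EReal) * (∑ i, fPoisson (y i) (p i)) + ((‖x - p‖ ^ 2 / 2 : ℝ) : EReal)
          ≤ (β : EReal) * (∑ i, fPoisson (y i) (z i)) + ((‖x - z‖ ^ 2 / 2 : ℝ) : EReal))
    ∧ (∀ q : EuclideanSpace ℝ (Fin n),
        (∀ z : EuclideanSpace ℝ (Fin n),
          (β : EReal) * (∑ i, fPoisson (y i) (q i)) + ((‖x - q‖ ^ 2 / 2 : ℝ) : EReal)
            ≤ (β : EReal) * (∑ i, fPoisson (y i) (z i)) + ((‖x - z‖ ^ 2 / 2 : ℝ) : EReal))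
        → q = p) := by
  obtain ⟨r, hr⟩ := poissonObjective_poissonProxVec_eq_coe x hy hβ
  exact unique_minimizer_of_add_sq_norm_sub_le (Φ := poissonObjective y β x) hr
    (poissonObjective_poissonProxVec_add_sq_le x hy hβ)
end

section
/- For the scalar function f(t) = −a log t + t on (0,∞) (+∞ elsewhere), with a > 0 and β > 0, prox_{βf}(x) = (x − β + √((x−β)² + 4βa))/2 for all x ∈ ℝ, and this value is always strictly positive. -/
/-! The objective `t ↦ β(t - a log t) + (x - t)²/2` is `1`-strongly convex on `(0, ∞)`: by the
tangent-line bound `log u ≤ u - 1` it lies above its tangent at `p` plus `(t - p)²/2`. At a stationary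
point, `β(1 - a/p) + p - x = 0`, i.e. `p² - (x - β)p = βa`, the tangent is flat, so `p` is the unique
minimiser; the positive root of that quadratic is the stated formula. -/

open Real

lemma coe_mul_ite_top_add {β : ℝ} (hβ : 0 < β) (P : Prop) [Decidable P] (u v : ℝ) :
    (β : EReal) * (if P then (u : EReal) else ⊤) + (v : EReal)
      = if P then ((β * u + v : ℝ) : EReal) else ⊤ := by
  split_ifs
  · rw [EReal.coe_add, EReal.coe_mul]
  · rw [EReal.coe_mul_top_of_pos hβ, EReal.top_add_coe]

lemma unique_min_of_quadratic_growth {φ : ℝ → ℝ} {p : ℝ} (hp : 0 < p)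
    (hgrowth : ∀ t, 0 < t → φ p + (t - p) ^ 2 / 2 ≤ φ t) :
    let F : ℝ → EReal := fun t => if 0 < t then (φ t : EReal) else ⊤
    (∀ t, F p ≤ F t) ∧ ∀ q, (∀ t, F q ≤ F t) → q = p := by
  intro F
  have hmin : ∀ t, F p ≤ F t := by
    intro t
    by_cases ht : 0 < t
    · simp only [F, if_pos hp, if_pos ht, EReal.coe_le_coe_iff]
      linarith [hgrowth t ht, sq_nonneg (t - p)]
    · simp only [F, if_neg ht, le_top]
  refine ⟨hmin, fun q hq => ?_⟩
  have hq0 : 0 < q := by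
    by_contra hq0
    simpa [F, hp, hq0] using hq p
  have hqp : φ q ≤ φ p := by simpa [F, hp, hq0] using hq p
  nlinarith [hgrowth q hq0, sq_nonneg (q - p)]

lemma add_sqrt_sq_add_pos {b c : ℝ} (hc : 0 < c) : 0 < b + √(b ^ 2 + 4 * c) := by
  have : -b < √(b ^ 2 + 4 * c) := lt_sqrt_of_sq_lt (by nlinarith)
  linarith

lemma quadratic_root_formula (b c : ℝ) (hc : 0 ≤ c) :
    ((b + √(b ^ 2 + 4 * c)) / 2) ^ 2 - b * ((b + √(b ^ 2 + 4 * c)) / 2) = c := by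
  have := sq_sqrt (show 0 ≤ b ^ 2 + 4 * c by positivity)
  nlinarith

lemma neg_log_add_sq_quadratic_growth {a β x p t : ℝ} (hβa : 0 ≤ β * a) (hp : 0 < p) (ht : 0 < t)
    (hstat : p ^ 2 - (x - β) * p = β * a) :
    β * (-a * log p + p) + (x - p) ^ 2 / 2 + (t - p) ^ 2 / 2
      ≤ β * (-a * log t + t) + (x - t) ^ 2 / 2 := by
  have hlog : log t - log p ≤ (t - p) / p := by
    rw [← log_div ht.ne' hp.ne', sub_div, div_self hp.ne']
    exact log_le_sub_one_of_pos (by positivity)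
  have hslope : β * a / p = p - (x - β) := by
    field_simp
    linarith
  have hlin : β * a * (log t - log p) ≤ (p - (x - β)) * (t - p) :=
    calc β * a * (log t - log p) ≤ β * a * ((t - p) / p) := mul_le_mul_of_nonneg_left hlog hβa
      _ = (p - (x - β)) * (t - p) := by rw [← hslope]; ring
  nlinarith

/-- For the scalar function `f(t) = −a log t + t` on `(0,∞)` (`+∞` elsewhere),
with `a > 0`, `β > 0`, the proximity operator of `βf` at `x` is
`(x − β + √((x−β)² + 4βa))/2`, and this value is strictly positive. -/
theorem prox_scalar_poisson
    (a β : ℝ) (ha : 0 < a) (hβ : 0 < β) (x : ℝ) :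
    let f : ℝ → EReal := fun t => if 0 < t then ((-a * Real.log t + t : ℝ) : EReal) else ⊤
    let p : ℝ := (x - β + Real.sqrt ((x - β) ^ 2 + 4 * β * a)) / 2
    0 < p
    ∧ (∀ t : ℝ,
        (β : EReal) * f p + (((x - p) ^ 2 / 2 : ℝ) : EReal)
          ≤ (β : EReal) * f t + (((x - t) ^ 2 / 2 : ℝ) : EReal))
    ∧ (∀ q : ℝ,
        (∀ t : ℝ,
          (β : EReal) * f q + (((x - q) ^ 2 / 2 : ℝ) : EReal)
            ≤ (β : EReal) * f t + (((x - t) ^ 2 / 2 : ℝ) : EReal))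
        → q = p) := by
  intro f p
  have hβa : 0 < β * a := mul_pos hβ ha
  have hp : 0 < p := by
    simp only [p, mul_assoc]
    exact half_pos (add_sqrt_sq_add_pos hβa)
  have hstat : p ^ 2 - (x - β) * p = β * a := by
    simp only [p, mul_assoc]
    exact quadratic_root_formula (x - β) (β * a) hβa.le
  have hunique := unique_min_of_quadratic_growth (φ := fun t => β * (-a * log t + t) + (x - t) ^ 2 / 2)
    hp fun t ht => neg_log_add_sq_quadratic_growth hβa.le hp ht hstat
  simp only [f, coe_mul_ite_top_add hβ]
  exact ⟨hp, hunique⟩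
end

section
/- If F : ℝⁿ → ℝᵐ is a tight frame operator, i.e. F Fᵀ = c·I with c > 0, A(x) = Fx − y is an affine map, and f ∈ Γ₀(ℝᵐ), then prox_{f∘A}(x) = x + c⁻¹ Fᵀ (prox_{cf} − I)(Fx − y). -/
/-! With `p = x + c⁻¹ F*(q − (F x − y))` the tight-frame identity `F F* = c I` gives `F p − y = q`
and `‖x − p‖² = c⁻¹ ‖(F x − y) − q‖²`, while the C*-identity `‖F‖² = ‖F F*‖ ≤ c` gives
`‖F (x − z)‖² ≤ c ‖x − z‖²`. Testing the minimality of `q` against `v = F z − y` and dividing by `c`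
is then the minimality of `p`. -/

open ContinuousLinearMap

namespace EReal

lemma add_coe_eq_inv_mul_coe_mul_add_coe {c : ℝ} (hc : 0 < c) (a : EReal) (r : ℝ) :
    a + r = ((c⁻¹ : ℝ) : EReal) * (c * a + ↑(c * r)) := by
  rw [left_distrib_of_nonneg_of_ne_top (EReal.coe_nonneg.2 (inv_nonneg.2 hc.le)) (coe_ne_top _),
    ← mul_assoc, ← coe_mul, ← coe_mul, inv_mul_cancel_left₀ hc.ne', inv_mul_cancel₀ hc.ne',
    coe_one, one_mul]

end EReal

section TightFrame

variable {E G : Type*} [NormedAddCommGroup E] [InnerProductSpace ℝ E] [CompleteSpace E]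
  [NormedAddCommGroup G] [InnerProductSpace ℝ G] [CompleteSpace G]
  {F : E →L[ℝ] G} {c : ℝ}

lemma apply_add_inv_smul_adjoint_of_tight (hc : c ≠ 0) (htight : ∀ u, F (adjoint F u) = c • u)
    (x : E) (w : G) : F (x + c⁻¹ • adjoint F w) = F x + w := by
  rw [map_add, map_smul, htight, smul_smul, inv_mul_cancel₀ hc, one_smul]

lemma norm_adjoint_sq_of_tight (htight : ∀ u, F (adjoint F u) = c • u) (u : G) :
    ‖adjoint F u‖ ^ 2 = c * ‖u‖ ^ 2 := by
  rw [← real_inner_self_eq_norm_sq, adjoint_inner_left, htight, real_inner_smul_right,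
    real_inner_self_eq_norm_sq]

lemma norm_inv_smul_adjoint_sq_of_tight (htight : ∀ u, F (adjoint F u) = c • u) (u : G) :
    ‖c⁻¹ • adjoint F u‖ ^ 2 = c⁻¹ * ‖u‖ ^ 2 := by
  rw [norm_smul, mul_pow, norm_adjoint_sq_of_tight htight, Real.norm_eq_abs, sq_abs]
  rcases eq_or_ne c 0 with rfl | hc
  · simp
  · field_simp

lemma norm_mul_self_le_of_tight (hc : 0 ≤ c) (htight : ∀ u, F (adjoint F u) = c • u) :
    ‖F‖ * ‖F‖ ≤ c :=
  calc ‖F‖ * ‖F‖ = ‖adjoint F‖ * ‖adjoint F‖ := by rw [LinearIsometryEquiv.norm_map]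
    _ = ‖F ∘L adjoint F‖ := by rw [← norm_adjoint_comp_self, adjoint_adjoint]
    _ = ‖c • ContinuousLinearMap.id ℝ G‖ := by congr 1; ext1 u; exact htight u
    _ ≤ ‖c‖ * ‖ContinuousLinearMap.id ℝ G‖ := opNorm_smul_le _ _
    _ ≤ c * 1 := by gcongr; exacts [(Real.norm_of_nonneg hc).le, norm_id_le]
    _ = c := mul_one c

lemma apply_norm_sq_le_of_tight (hc : 0 ≤ c) (htight : ∀ u, F (adjoint F u) = c • u) (v : E) :
    ‖F v‖ ^ 2 ≤ c * ‖v‖ ^ 2 :=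
  calc ‖F v‖ ^ 2 ≤ (‖F‖ * ‖v‖) ^ 2 := by gcongr; exact F.le_opNorm v
    _ = ‖F‖ * ‖F‖ * ‖v‖ ^ 2 := by ring
    _ ≤ c * ‖v‖ ^ 2 := by gcongr; exact norm_mul_self_le_of_tight hc htight

end TightFrame

theorem prox_comp_tight_frame_general
    {n m : ℕ}
    (F : EuclideanSpace ℝ (Fin n) →L[ℝ] EuclideanSpace ℝ (Fin m))
    (c : ℝ) (hc : 0 < c)
    (htight : ∀ u : EuclideanSpace ℝ (Fin m),
      F (ContinuousLinearMap.adjoint F u) = c • u)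
    (y : EuclideanSpace ℝ (Fin m))
    (f : EuclideanSpace ℝ (Fin m) → EReal)
    (x : EuclideanSpace ℝ (Fin n))
    (q : EuclideanSpace ℝ (Fin m))
    -- `q = prox_{c·f} (F x − y)`:
    (hq : ∀ v : EuclideanSpace ℝ (Fin m),
      (c : EReal) * f q + ((‖(F x - y) - q‖ ^ 2 / 2 : ℝ) : EReal)
        ≤ (c : EReal) * f v + ((‖(F x - y) - v‖ ^ 2 / 2 : ℝ) : EReal)) :
    -- then `x + c⁻¹ Fᵀ (q − (F x − y))` is the prox of `f ∘ A` at `x`: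
    ∀ z : EuclideanSpace ℝ (Fin n),
      f (F (x + c⁻¹ • ContinuousLinearMap.adjoint F (q - (F x - y))) - y)
          + ((‖x - (x + c⁻¹ • ContinuousLinearMap.adjoint F (q - (F x - y)))‖ ^ 2 / 2 : ℝ) : EReal)
        ≤ f (F z - y) + ((‖x - z‖ ^ 2 / 2 : ℝ) : EReal) := by
  intro z
  have hFp : F (x + c⁻¹ • adjoint F (q - (F x - y))) - y = q := by
    rw [apply_add_inv_smul_adjoint_of_tight hc.ne' htight]; abel
  have hxp : ‖x - (x + c⁻¹ • adjoint F (q - (F x - y)))‖ ^ 2 / 2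
      = c⁻¹ * (‖(F x - y) - q‖ ^ 2 / 2) := by
    rw [sub_add_cancel_left, norm_neg, norm_inv_smul_adjoint_sq_of_tight htight, norm_sub_rev]
    ring
  have hFz : ‖(F x - y) - (F z - y)‖ ^ 2 / 2 ≤ c * (‖x - z‖ ^ 2 / 2) := by
    rw [sub_sub_sub_cancel_right, ← map_sub]
    linarith [apply_norm_sq_le_of_tight hc.le htight (x - z)]
  rw [hFp, hxp, EReal.add_coe_eq_inv_mul_coe_mul_add_coe hc (f q),
    EReal.add_coe_eq_inv_mul_coe_mul_add_coe hc (f (F z - y)), mul_inv_cancel_left₀ hc.ne']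
  refine mul_le_mul_of_nonneg_left ?_ (EReal.coe_nonneg.2 (inv_nonneg.2 hc.le))
  calc _ ≤ _ := hq (F z - y)
    _ ≤ _ := by gcongr

/-- If `F : ℝⁿ → ℝᵐ` is a tight frame (`F Fᵀ = c I`, `c > 0`),
`A x = F x − y`, and `f ∈ Γ₀(ℝᵐ)`, then
`prox_{f∘A}(x) = x + c⁻¹ Fᵀ (prox_{cf} − I)(F x − y)`.
Here the prox of `c f` at `A x` is encoded by its minimizing property. -/
theorem prox_comp_tight_frame
    {n m : ℕ}
    (F : EuclideanSpace ℝ (Fin n) →L[ℝ] EuclideanSpace ℝ (Fin m))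
    (c : ℝ) (hc : 0 < c)
    (htight : ∀ u : EuclideanSpace ℝ (Fin m),
      F (ContinuousLinearMap.adjoint F u) = c • u)
    (y : EuclideanSpace ℝ (Fin m))
    (f : EuclideanSpace ℝ (Fin m) → EReal)
    (hproper : ∃ v, f v ≠ ⊤)
    (hnotbot : ∀ v, f v ≠ ⊥)
    (hconv : ∀ u v : EuclideanSpace ℝ (Fin m), ∀ a b : ℝ, 0 ≤ a → 0 ≤ b → a + b = 1 →
      f (a • u + b • v) ≤ (a : EReal) * f u + (b : EReal) * f v)
    (hlsc : LowerSemicontinuous f)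
    (x : EuclideanSpace ℝ (Fin n))
    (q : EuclideanSpace ℝ (Fin m))
    -- `q = prox_{c·f} (F x − y)`:
    (hq : ∀ v : EuclideanSpace ℝ (Fin m),
      (c : EReal) * f q + ((‖(F x - y) - q‖ ^ 2 / 2 : ℝ) : EReal)
        ≤ (c : EReal) * f v + ((‖(F x - y) - v‖ ^ 2 / 2 : ℝ) : EReal)) :
    -- then `x + c⁻¹ Fᵀ (q − (F x − y))` is the prox of `f ∘ A` at `x`:
    ∀ z : EuclideanSpace ℝ (Fin n),
      f (F (x + c⁻¹ • ContinuousLinearMap.adjoint F (q - (F x - y))) - y)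
          + ((‖x - (x + c⁻¹ • ContinuousLinearMap.adjoint F (q - (F x - y)))‖ ^ 2 / 2 : ℝ) : EReal)
        ≤ f (F z - y) + ((‖x - z‖ ^ 2 / 2 : ℝ) : EReal) :=
  prox_comp_tight_frame_general F c hc htight y f x q hq
end

section
/- (Fenchel–Rockafellar duality for prox under affine precomposition) Let F : ℝⁿ → ℝᵐ be linear, y ∈ ℝᵐ, A(x) = Fx − y, and f ∈ Γ₀(ℝᵐ) with ri(dom f ∩ Im A) ≠ ∅. If ū minimizes u ↦ ½‖x − Fᵀu‖² + ⟨u, y⟩ + f*(u), then prox_{f∘A}(x) = x − Fᵀ ū. -/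
/-!
Minimality of `ū` for the dual objective, a smooth quadratic plus the convex function `f*`,
yields the first-order condition that `w = F (x - Fᵀ ū) - y` is a subgradient of `f*` at `ū`.
For a closed proper convex `f` this forces equality in the Fenchel–Young inequality,
`f w = ⟪ū, w⟫ - f* ū`: otherwise a hyperplane separating `(w, ⟪ū, w⟫ - f* ū)` from the epigraph
of `f` produces a point where `f*` violates the subgradient inequality. The primal inequality
then follows from Fenchel–Young at `F p - y` and the expansion
`½‖x - p‖² = ½‖Fᵀ ū‖² + ⟪Fᵀ ū, p̄ - p⟫ + ½‖p̄ - p‖²` with `p̄ = x - Fᵀ ū`.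
-/

open scoped RealInnerProductSpace
open Set Filter Topology

theorem le_of_forall_le_add_mul {a b c : ℝ} (h : ∀ t ∈ Ioc (0 : ℝ) 1, a ≤ b + t * c) :
    a ≤ b := by
  have hlim : Tendsto (fun t : ℝ => b + t * c) (𝓝[>] 0) (𝓝 b) := by
    have hcont : Continuous fun t : ℝ => b + t * c := by fun_prop
    simpa using (hcont.tendsto 0).mono_left nhdsWithin_le_nhds
  exact ge_of_tendsto hlim (eventually_of_mem (Ioc_mem_nhdsGT one_pos) h)

theorem EReal.coe_le_of_forall_le_coe {a : ℝ} {b : EReal}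
    (h : ∀ ρ : ℝ, b ≤ ρ → a ≤ ρ) : (a : EReal) ≤ b := by
  by_contra! hlt
  obtain ⟨ρ, hbρ, hρa⟩ := EReal.lt_iff_exists_real_btwn.1 hlt
  exact (EReal.coe_lt_coe_iff.1 hρa).not_ge (h ρ hbρ.le)

theorem ne_top_of_forall_coe_add_le {α : Type*} {q : α → ℝ} {g : α → EReal} {a b : α} {r : ℝ}
    (hmin : ∀ u, (q a : EReal) + g a ≤ q u + g u) (hb : g b ≤ r) : g a ≠ ⊤ := by
  intro htop
  have := (hmin b).trans (add_le_add_right hb _)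
  rw [htop, EReal.coe_add_top, top_le_iff, ← EReal.coe_add] at this
  exact EReal.coe_ne_top _ this

def epigraph {E : Type*} (f : E → EReal) : Set (E × ℝ) :=
  {p | f p.1 ≤ p.2}

theorem convex_epigraph {E : Type*} [AddCommGroup E] [Module ℝ E] {f : E → EReal}
    (hconv : ∀ u v : E, ∀ a b : ℝ, 0 ≤ a → 0 ≤ b → a + b = 1 →
      f (a • u + b • v) ≤ (a : EReal) * f u + (b : EReal) * f v) :
    Convex ℝ (epigraph f) := by
  rintro ⟨u, ρ⟩ hu ⟨v, σ⟩ hv a b ha hb hab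
  calc f (a • u + b • v) ≤ (a : EReal) * f u + (b : EReal) * f v := hconv u v a b ha hb hab
    _ ≤ (a : EReal) * ρ + (b : EReal) * σ :=
      add_le_add (mul_le_mul_of_nonneg_left hu (EReal.coe_nonneg.2 ha))
        (mul_le_mul_of_nonneg_left hv (EReal.coe_nonneg.2 hb))
    _ = ((a * ρ + b * σ : ℝ) : EReal) := by norm_cast

theorem isClosed_epigraph {E : Type*} [TopologicalSpace E] {f : E → EReal}
    (hlsc : LowerSemicontinuous f) : IsClosed (epigraph f) :=
  hlsc.isClosed_epigraph.preimage
    (continuous_fst.prodMk (continuous_coe_real_ereal.comp continuous_snd))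

section InnerProductSpace

variable {E : Type*} [NormedAddCommGroup E] [InnerProductSpace ℝ E]

theorem ContinuousLinearMap.exists_inner_add_mul_eq [CompleteSpace E] (ψ : E × ℝ →L[ℝ] ℝ) :
    ∃ (φ : E) (a : ℝ), ∀ v ρ, ψ (v, ρ) = ⟪φ, v⟫ + a * ρ := by
  refine ⟨(InnerProductSpace.toDual ℝ E).symm (ψ.comp (.inl ℝ E ℝ)), ψ (0, 1), fun v ρ => ?_⟩
  rw [InnerProductSpace.toDual_symm_apply, ← ψ.comp_inl_add_comp_inr]
  have hρ : ((0 : E), ρ) = ρ • ((0 : E), (1 : ℝ)) := by simp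
  simp only [ContinuousLinearMap.comp_apply, ContinuousLinearMap.inl_apply,
    ContinuousLinearMap.inr_apply, hρ, map_smul, smul_eq_mul, mul_comm]

variable {f : E → EReal}

theorem exists_separation_epigraph [CompleteSpace E] (hconv : Convex ℝ (epigraph f))
    (hclosed : IsClosed (epigraph f)) {w : E} {β : ℝ} (hβ : (β : EReal) < f w) :
    ∃ (φ : E) (a c : ℝ), ⟪φ, w⟫ + a * β < c ∧ ∀ v (ρ : ℝ), f v ≤ ρ → c < ⟪φ, v⟫ + a * ρ := by
  obtain ⟨ψ, c, hψw, hψepi⟩ :=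
    geometric_hahn_banach_point_closed hconv hclosed (x := (w, β)) hβ.not_ge
  obtain ⟨φ, a, hψ⟩ := ψ.exists_inner_add_mul_eq
  exact ⟨φ, a, c, hψ w β ▸ hψw, fun v ρ hvρ => hψ v ρ ▸ hψepi (v, ρ) hvρ⟩

noncomputable def fenchelConjugate (f : E → EReal) (u : E) : EReal :=
  ⨆ w, ((⟪u, w⟫ : ℝ) : EReal) - f w

theorem fenchelConjugate_le_coe_iff {u : E} {r : ℝ} :
    fenchelConjugate f u ≤ r ↔ ∀ v, ((⟪u, v⟫ - r : ℝ) : EReal) ≤ f v := by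
  refine iSup_le_iff.trans (forall_congr' fun v => ?_)
  rw [EReal.sub_le_iff_le_add (.inr (EReal.coe_ne_top r)) (.inr (EReal.coe_ne_bot r)),
    EReal.coe_sub, EReal.sub_le_iff_le_add (.inl (EReal.coe_ne_bot r)) (.inl (EReal.coe_ne_top r)),
    add_comm]

theorem fenchelConjugate_ne_bot (hf : ∃ v, f v ≠ ⊤) (u : E) : fenchelConjugate f u ≠ ⊥ := by
  obtain ⟨v, hv⟩ := hf
  refine ne_bot_of_le_ne_bot ?_ (le_iSup (fun w => ((⟪u, w⟫ : ℝ) : EReal) - f w) v)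
  generalize f v = b at hv
  induction b using EReal.rec <;> simp_all [← EReal.coe_sub]

theorem fenchelConjugate_convexComb_le {u₁ u₂ : E} {r₁ r₂ t : ℝ}
    (h₁ : fenchelConjugate f u₁ ≤ r₁) (h₂ : fenchelConjugate f u₂ ≤ r₂) (ht₀ : 0 ≤ t)
    (ht₁ : t ≤ 1) :
    fenchelConjugate f ((1 - t) • u₁ + t • u₂) ≤ ((1 - t) * r₁ + t * r₂ : ℝ) := by
  rw [fenchelConjugate_le_coe_iff] at *
  intro v
  have hcomb : ⟪(1 - t) • u₁ + t • u₂, v⟫ - ((1 - t) * r₁ + t * r₂)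
      = (1 - t) * (⟪u₁, v⟫ - r₁) + t * (⟪u₂, v⟫ - r₂) := by
    simp only [inner_add_left, real_inner_smul_left]; ring
  rw [hcomb]
  rcases le_total (⟪u₁, v⟫ - r₁) (⟪u₂, v⟫ - r₂) with h | h
  · exact (EReal.coe_le_coe_iff.2 (by nlinarith)).trans (h₂ v)
  · exact (EReal.coe_le_coe_iff.2 (by nlinarith)).trans (h₁ v)

theorem fenchelConjugate_le_of_forall_lt {φ : E} {a c : ℝ} (ha : 0 < a)
    (h : ∀ v (ρ : ℝ), f v ≤ ρ → c < ⟪φ, v⟫ + a * ρ) :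
    fenchelConjugate f (-a⁻¹ • φ) ≤ ((-c / a : ℝ) : EReal) := by
  refine fenchelConjugate_le_coe_iff.2 fun v => EReal.coe_le_of_forall_le_coe fun ρ hρ => ?_
  have hval : ⟪-a⁻¹ • φ, v⟫ - -c / a = (c - ⟪φ, v⟫) / a := by
    rw [real_inner_smul_left]; field_simp; ring
  rw [hval, div_le_iff₀ ha]
  linarith [h v ρ hρ]

theorem exists_fenchelConjugate_le_coe [CompleteSpace E] (hproper : ∃ v, f v ≠ ⊤)
    (hnotbot : ∀ v, f v ≠ ⊥) (hconv : Convex ℝ (epigraph f)) (hclosed : IsClosed (epigraph f)) :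
    ∃ (u : E) (r : ℝ), fenchelConjugate f u ≤ r := by
  obtain ⟨v, hv⟩ := hproper
  obtain ⟨ρ, hρ⟩ : ∃ ρ : ℝ, f v = ρ := ⟨_, (EReal.coe_toReal hv (hnotbot v)).symm⟩
  obtain ⟨φ, a, c, hlt, hepi⟩ := exists_separation_epigraph hconv hclosed (w := v) (β := ρ - 1)
    (hρ ▸ EReal.coe_lt_coe_iff.2 (sub_one_lt ρ))
  have ha : 0 < a := by linarith [hepi v ρ hρ.le]
  exact ⟨_, _, fenchelConjugate_le_of_forall_lt ha hepi⟩

theorem apply_le_of_subgradient_fenchelConjugate [CompleteSpace E]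
    (hconv : Convex ℝ (epigraph f)) (hclosed : IsClosed (epigraph f)) {ubar w : E} {s : ℝ}
    (hs : fenchelConjugate f ubar ≤ s)
    (hsub : ∀ u (r : ℝ), fenchelConjugate f u ≤ r → s + ⟪w, u - ubar⟫ ≤ r) :
    f w ≤ ((⟪ubar, w⟫ - s : ℝ) : EReal) := by
  by_contra! hlt
  obtain ⟨φ, a, c, hw, hepi⟩ := exists_separation_epigraph hconv hclosed hlt
  -- Adding `l` times the Fenchel–Young inequality at `ubar` tilts the separating hyperplane
  -- until it is non-vertical (`a + l > 0`), whatever the sign of `a`.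
  set l := |a| + 1
  have hl : 0 < l := by positivity
  have hal : 0 < a + l := by linarith [neg_abs_le a]
  have hepi' : ∀ v (ρ : ℝ), f v ≤ ρ → c - l * s < ⟪φ - l • ubar, v⟫ + (a + l) * ρ := by
    intro v ρ hvρ
    have hFY : ⟪ubar, v⟫ - s ≤ ρ :=
      EReal.coe_le_coe_iff.1 ((fenchelConjugate_le_coe_iff.1 hs v).trans hvρ)
    rw [inner_sub_left, real_inner_smul_left]
    nlinarith [hepi v ρ hvρ, mul_le_mul_of_nonneg_left hFY hl.le]
  have h := hsub _ _ (fenchelConjugate_le_of_forall_lt hal hepi')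
  simp only [inner_sub_right, inner_smul_right, real_inner_comm w] at h hw
  rw [le_div_iff₀ hal] at h
  have hcancel : (a + l)⁻¹ * (⟪w, φ⟫ - l * ⟪w, ubar⟫) * (a + l) = ⟪w, φ⟫ - l * ⟪w, ubar⟫ := by
    field_simp
  linarith

section Dual

variable {G : Type*} [NormedAddCommGroup G] [InnerProductSpace ℝ G]

theorem half_norm_sub_sq_add_inner_line (T : E →L[ℝ] G) (x : G) (y u d : E) (t : ℝ) :
    ‖x - T (u + t • d)‖ ^ 2 / 2 + ⟪u + t • d, y⟫
      = ‖x - T u‖ ^ 2 / 2 + ⟪u, y⟫ - t * (⟪x - T u, T d⟫ - ⟪d, y⟫) + t ^ 2 * (‖T d‖ ^ 2 / 2) := by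
  rw [map_add, map_smul, ← sub_sub, norm_sub_sq_real, norm_smul, real_inner_smul_right,
    inner_add_left, real_inner_smul_left, Real.norm_eq_abs, mul_pow, sq_abs]
  ring

variable [CompleteSpace E] [CompleteSpace G]

theorem add_inner_le_of_forall_dual_le (F : G →L[ℝ] E) {x : G} {y ubar : E} {s : ℝ}
    (hs : fenchelConjugate f ubar = s)
    (hmin : ∀ u, ((‖x - F.adjoint ubar‖ ^ 2 / 2 + ⟪ubar, y⟫ : ℝ) : EReal) + fenchelConjugate f ubar
      ≤ ((‖x - F.adjoint u‖ ^ 2 / 2 + ⟪u, y⟫ : ℝ) : EReal) + fenchelConjugate f u)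
    {u : E} {r : ℝ} (hr : fenchelConjugate f u ≤ r) :
    s + ⟪F (x - F.adjoint ubar) - y, u - ubar⟫ ≤ r := by
  refine le_of_forall_le_add_mul (c := ‖F.adjoint (u - ubar)‖ ^ 2 / 2) fun t ⟨ht₀, ht₁⟩ => ?_
  have hline : fenchelConjugate f (ubar + t • (u - ubar)) ≤ ((1 - t) * s + t * r : ℝ) := by
    convert fenchelConjugate_convexComb_le hs.le hr ht₀.le ht₁ using 2
    module
  have key := (hmin (ubar + t • (u - ubar))).trans (add_le_add_right hline _)
  rw [hs, ← EReal.coe_add, ← EReal.coe_add, EReal.coe_le_coe_iff,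
    half_norm_sub_sq_add_inner_line] at key
  have hgrad : ⟪x - F.adjoint ubar, F.adjoint (u - ubar)⟫ - ⟪u - ubar, y⟫
      = ⟪F (x - F.adjoint ubar) - y, u - ubar⟫ := by
    rw [ContinuousLinearMap.adjoint_inner_right, inner_sub_left _ y, real_inner_comm y]
  rw [hgrad] at key
  refine le_of_mul_le_mul_left ?_ ht₀
  linarith

theorem apply_add_half_norm_sq_le_of_le_inner_sub (F : G →L[ℝ] E) {x : G} {y ubar : E} {s : ℝ}
    (hs : fenchelConjugate f ubar ≤ s)
    (hw : f (F (x - F.adjoint ubar) - y) ≤ ((⟪ubar, F (x - F.adjoint ubar) - y⟫ - s : ℝ) : EReal))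
    (p : G) :
    f (F (x - F.adjoint ubar) - y) + ((‖x - (x - F.adjoint ubar)‖ ^ 2 / 2 : ℝ) : EReal)
      ≤ f (F p - y) + ((‖x - p‖ ^ 2 / 2 : ℝ) : EReal) := by
  set pbar := x - F.adjoint ubar with hpbar
  have hreal : ⟪ubar, F pbar - y⟫ - s + ‖x - pbar‖ ^ 2 / 2
      ≤ ⟪ubar, F p - y⟫ - s + ‖x - p‖ ^ 2 / 2 := by
    have hxp : x - p = F.adjoint ubar + (pbar - p) := by rw [hpbar]; abel
    have hinner : ⟪ubar, F pbar - y⟫ - ⟪ubar, F p - y⟫ = ⟪F.adjoint ubar, pbar - p⟫ := by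
      rw [← inner_sub_right, sub_sub_sub_cancel_right, ← map_sub,
        ContinuousLinearMap.adjoint_inner_left]
    rw [hxp, norm_add_sq_real, sub_sub_cancel]
    nlinarith [sq_nonneg ‖pbar - p‖]
  calc f (F pbar - y) + ((‖x - pbar‖ ^ 2 / 2 : ℝ) : EReal)
      ≤ ((⟪ubar, F pbar - y⟫ - s : ℝ) : EReal) + ((‖x - pbar‖ ^ 2 / 2 : ℝ) : EReal) := by gcongr
    _ ≤ ((⟪ubar, F p - y⟫ - s : ℝ) : EReal) + ((‖x - p‖ ^ 2 / 2 : ℝ) : EReal) := by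
      exact_mod_cast hreal
    _ ≤ f (F p - y) + ((‖x - p‖ ^ 2 / 2 : ℝ) : EReal) := by
      gcongr
      exact fenchelConjugate_le_coe_iff.1 hs _

end Dual

end InnerProductSpace

theorem prox_comp_affine_duality_general
    {n m : ℕ}
    (F : EuclideanSpace ℝ (Fin n) →L[ℝ] EuclideanSpace ℝ (Fin m))
    (y : EuclideanSpace ℝ (Fin m))
    (f : EuclideanSpace ℝ (Fin m) → EReal)
    (hproper : ∃ v, f v ≠ ⊤)
    (hnotbot : ∀ v, f v ≠ ⊥)
    (hconv : ∀ u v : EuclideanSpace ℝ (Fin m), ∀ a b : ℝ, 0 ≤ a → 0 ≤ b → a + b = 1 →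
      f (a • u + b • v) ≤ (a : EReal) * f u + (b : EReal) * f v)
    (hlsc : LowerSemicontinuous f)
    (fstar : EuclideanSpace ℝ (Fin m) → EReal)
    (hfstar : ∀ u, fstar u = ⨆ w : EuclideanSpace ℝ (Fin m), (((⟪u, w⟫ : ℝ)) : EReal) - f w)
    (x : EuclideanSpace ℝ (Fin n))
    (ubar : EuclideanSpace ℝ (Fin m))
    -- `ū` minimizes the dual objective:
    (hubar : ∀ u : EuclideanSpace ℝ (Fin m),
      ((‖x - ContinuousLinearMap.adjoint F ubar‖ ^ 2 / 2 + ⟪ubar, y⟫ : ℝ) : EReal) + fstar ubar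
        ≤ ((‖x - ContinuousLinearMap.adjoint F u‖ ^ 2 / 2 + ⟪u, y⟫ : ℝ) : EReal) + fstar u) :
    -- then `x − Fᵀ ū = prox_{f ∘ A}(x)`:
    ∀ p : EuclideanSpace ℝ (Fin n),
      f (F (x - ContinuousLinearMap.adjoint F ubar) - y)
          + ((‖x - (x - ContinuousLinearMap.adjoint F ubar)‖ ^ 2 / 2 : ℝ) : EReal)
        ≤ f (F p - y) + ((‖x - p‖ ^ 2 / 2 : ℝ) : EReal) := by
  obtain rfl : fstar = fenchelConjugate f := funext hfstar
  have hconvex := convex_epigraph hconv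
  have hclosed := isClosed_epigraph hlsc
  have hne_top : fenchelConjugate f ubar ≠ ⊤ := by
    obtain ⟨u₀, r₀, hr₀⟩ := exists_fenchelConjugate_le_coe hproper hnotbot hconvex hclosed
    exact ne_top_of_forall_coe_add_le
      (q := fun u => ‖x - F.adjoint u‖ ^ 2 / 2 + ⟪u, y⟫) hubar hr₀
  obtain ⟨s, hs⟩ : ∃ s : ℝ, fenchelConjugate f ubar = s :=
    ⟨_, (EReal.coe_toReal hne_top (fenchelConjugate_ne_bot hproper ubar)).symm⟩
  have hsubgrad (u : _) (r : ℝ) (hr : fenchelConjugate f u ≤ r) :=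
    add_inner_le_of_forall_dual_le F hs hubar hr
  exact apply_add_half_norm_sq_le_of_le_inner_sub F hs.le
    (apply_le_of_subgradient_fenchelConjugate hconvex hclosed hs.le hsubgrad)

/-- Fenchel–Rockafellar duality for prox under affine precomposition.
With `A x = F x − y`, `f ∈ Γ₀(ℝᵐ)` and `ri(dom f ∩ Im A) ≠ ∅`, if `ū` minimizes the
dual objective `u ↦ ½‖x − Fᵀu‖² + ⟨u, y⟩ + f*(u)`, then `prox_{f∘A}(x) = x − Fᵀ ū`. -/
theorem prox_comp_affine_duality
    {n m : ℕ}
    (F : EuclideanSpace ℝ (Fin n) →L[ℝ] EuclideanSpace ℝ (Fin m))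
    (y : EuclideanSpace ℝ (Fin m))
    (f : EuclideanSpace ℝ (Fin m) → EReal)
    (hproper : ∃ v, f v ≠ ⊤)
    (hnotbot : ∀ v, f v ≠ ⊥)
    (hconv : ∀ u v : EuclideanSpace ℝ (Fin m), ∀ a b : ℝ, 0 ≤ a → 0 ≤ b → a + b = 1 →
      f (a • u + b • v) ≤ (a : EReal) * f u + (b : EReal) * f v)
    (hlsc : LowerSemicontinuous f)
    -- qualification condition: ri(dom f ∩ Im A) ≠ ∅
    (hqual : (intrinsicInterior ℝ
      ({v | f v ≠ ⊤} ∩ Set.range (fun x : EuclideanSpace ℝ (Fin n) => F x - y))).Nonempty)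
    (fstar : EuclideanSpace ℝ (Fin m) → EReal)
    (hfstar : ∀ u, fstar u = ⨆ w : EuclideanSpace ℝ (Fin m), (((⟪u, w⟫ : ℝ)) : EReal) - f w)
    (x : EuclideanSpace ℝ (Fin n))
    (ubar : EuclideanSpace ℝ (Fin m))
    -- `ū` minimizes the dual objective:
    (hubar : ∀ u : EuclideanSpace ℝ (Fin m),
      ((‖x - ContinuousLinearMap.adjoint F ubar‖ ^ 2 / 2 + ⟪ubar, y⟫ : ℝ) : EReal) + fstar ubar
        ≤ ((‖x - ContinuousLinearMap.adjoint F u‖ ^ 2 / 2 + ⟪u, y⟫ : ℝ) : EReal) + fstar u) :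
    -- then `x − Fᵀ ū = prox_{f ∘ A}(x)`:
    ∀ p : EuclideanSpace ℝ (Fin n),
      f (F (x - ContinuousLinearMap.adjoint F ubar) - y)
          + ((‖x - (x - ContinuousLinearMap.adjoint F ubar)‖ ^ 2 / 2 : ℝ) : EReal)
        ≤ f (F p - y) + ((‖x - p‖ ^ 2 / 2 : ℝ) : EReal) :=
  prox_comp_affine_duality_general F y f hproper hnotbot hconv hlsc fstar hfstar x ubar hubar
end

section
/- Let ψ : ℝ → ℝ be convex, even, nonnegative, nondecreasing on [0,∞), with ψ(0)=0 and right derivative ψ'₊(0) > 0 at 0. Then for γ > 0 and α ∈ ℝ: prox_{γψ}(α) = 0 if |α| ≤ γψ'₊(0), and otherwise prox_{γψ}(α) = α − γψ'(p) where p = prox_{γψ}(α) is nonzero with the same sign as α (assuming ψ differentiable on ℝ∖{0}). -/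
/-!
Convexity and `ψ 0 = 0` make `ψ s / s` nondecreasing in `s > 0`, so the right derivative `d`
at `0` gives the linear minorant `ψ t ≥ d |t|`. Then the prox objective at `p` is at least its
value at `0` plus `(γ d |p| - α p) + p² / 2`, which forces `p = 0` once `|α| ≤ γ d`.
Conversely, if `0` is the prox point, comparing with `±s` for small `s > 0` gives
`|α| ≤ γ ψ s / s + s / 2 → γ d`. Evenness lets one replace `p` by `-p`, which shows `α p ≥ 0`,
and away from `0` the prox point is a critical point of a differentiable function.
-/

open Filter Topology Set

theorem ConvexOn.mul_le_of_tendsto_div_nhdsGT {ψ : ℝ → ℝ} {d s : ℝ}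
    (hconv : ConvexOn ℝ (Ici 0) ψ) (hzero : ψ 0 = 0)
    (hd : Tendsto (fun h => ψ h / h) (𝓝[>] 0) (𝓝 d)) (hs : 0 < s) : d * s ≤ ψ s := by
  have hslope : d ≤ ψ s / s := by
    refine le_of_tendsto hd ?_
    filter_upwards [Ioo_mem_nhdsGT hs] with h hh
    simpa [hzero] using hconv.secant_mono self_mem_Ici hh.1.le hs.le hh.1.ne' hs.ne' hh.2.le
  rwa [le_div_iff₀ hs] at hslope

theorem mul_abs_le_of_even {ψ : ℝ → ℝ} {d : ℝ} (heven : ∀ t, ψ (-t) = ψ t)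
    (hψ : ∀ s, 0 < s → d * s ≤ ψ s) (hzero : ψ 0 = 0) (t : ℝ) : d * |t| ≤ ψ t := by
  rcases lt_trichotomy t 0 with ht | rfl | ht
  · simpa [abs_of_neg ht, heven] using hψ (-t) (neg_pos.2 ht)
  · simp [hzero]
  · simpa [abs_of_pos ht] using hψ t ht

/-- `prox_{γψ}(α)` is the minimizer of `proxObjective ψ γ α`. -/
noncomputable def proxObjective (ψ : ℝ → ℝ) (γ α t : ℝ) : ℝ := γ * ψ t + (α - t) ^ 2 / 2

section Prox

variable {ψ : ℝ → ℝ} {γ α p : ℝ}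

theorem prox_eq_zero_of_abs_le {d : ℝ} (hγ : 0 ≤ γ) (hψ : ∀ t, d * |t| ≤ ψ t) (hzero : ψ 0 = 0)
    (hp : ∀ t, proxObjective ψ γ α p ≤ proxObjective ψ γ α t) (hα : |α| ≤ γ * d) : p = 0 := by
  have hp0 : γ * ψ p + (α - p) ^ 2 / 2 ≤ α ^ 2 / 2 := by
    simpa [proxObjective, hzero] using hp 0
  have hlin : γ * d * |p| ≤ γ * ψ p := by
    rw [mul_assoc]; exact mul_le_mul_of_nonneg_left (hψ p) hγ
  have hcross : α * p ≤ γ * d * |p| :=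
    calc α * p ≤ |α| * |p| := by rw [← abs_mul]; exact le_abs_self _
      _ ≤ γ * d * |p| := mul_le_mul_of_nonneg_right hα (abs_nonneg p)
  exact pow_eq_zero_iff two_ne_zero |>.1 (le_antisymm (by nlinarith) (sq_nonneg p))

theorem abs_le_of_prox_eq_zero {d : ℝ} (heven : ∀ t, ψ (-t) = ψ t) (hzero : ψ 0 = 0)
    (hd : Tendsto (fun h => ψ h / h) (𝓝[>] 0) (𝓝 d))
    (h0 : ∀ t, proxObjective ψ γ α 0 ≤ proxObjective ψ γ α t) : |α| ≤ γ * d := by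
  have hbound : ∀ s, 0 < s → |α| ≤ γ * (ψ s / s) + s / 2 := by
    intro s hs
    have hright := h0 s
    have hleft := h0 (-s)
    simp only [proxObjective, heven, hzero] at hright hleft
    rw [mul_div_assoc', ← sub_le_iff_le_add, le_div_iff₀ hs]
    cases abs_cases α <;> nlinarith
  have hlim : Tendsto (fun s => γ * (ψ s / s) + s / 2) (𝓝[>] 0) (𝓝 (γ * d)) := by
    have hhalf : Tendsto (fun s : ℝ => s / 2) (𝓝[>] 0) (𝓝 0) :=
      ((continuous_id.div_const 2).tendsto' 0 0 (zero_div 2)).mono_left nhdsWithin_le_nhds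
    simpa using (hd.const_mul γ).add hhalf
  exact ge_of_tendsto hlim (eventually_nhdsWithin_of_forall hbound)

theorem mul_nonneg_of_prox (heven : ∀ t, ψ (-t) = ψ t)
    (hp : ∀ t, proxObjective ψ γ α p ≤ proxObjective ψ γ α t) : 0 ≤ α * p := by
  have := hp (-p)
  simp only [proxObjective, heven] at this
  nlinarith

theorem prox_eq_sub_of_hasDerivAt {ψ'p : ℝ} (hder : HasDerivAt ψ ψ'p p)
    (hp : ∀ t, proxObjective ψ γ α p ≤ proxObjective ψ γ α t) : p = α - γ * ψ'p := by
  have hobj : HasDerivAt (proxObjective ψ γ α) (γ * ψ'p - (α - p)) p :=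
    ((hder.const_mul γ).add ((((hasDerivAt_id' p).const_sub α).pow 2).div_const 2)).congr_deriv
      (by norm_num; ring)
  have hmin : IsLocalMin (proxObjective ψ γ α) p := Eventually.of_forall hp
  linarith [hmin.hasDerivAt_eq_zero hobj]

end Prox

theorem prox_sparsity_penalty_thresholding_general
    (ψ : ℝ → ℝ) (ψ' : ℝ → ℝ) (d : ℝ)
    (hconv : ConvexOn ℝ Set.univ ψ)
    (heven : ∀ t, ψ (-t) = ψ t)
    (hzero : ψ 0 = 0)
    (hdiff : ∀ t : ℝ, t ≠ 0 → HasDerivAt ψ (ψ' t) t)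
    (hd : Filter.Tendsto (fun h : ℝ => ψ h / h) (nhdsWithin 0 (Set.Ioi 0)) (nhds d))
    (γ : ℝ) (hγ : 0 < γ)
    (α p : ℝ)
    -- `p = prox_{γψ}(α)`:
    (hp : ∀ t : ℝ, γ * ψ p + (α - p) ^ 2 / 2 ≤ γ * ψ t + (α - t) ^ 2 / 2) :
    (|α| ≤ γ * d → p = 0)
    ∧ (γ * d < |α| →
        p ≠ 0 ∧ (0 < α → 0 < p) ∧ (α < 0 → p < 0) ∧ p = α - γ * ψ' p) := by
  have hlin : ∀ t, d * |t| ≤ ψ t := mul_abs_le_of_even heven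
    (fun _ hs => (hconv.subset (subset_univ _) (convex_Ici 0)).mul_le_of_tendsto_div_nhdsGT
      hzero hd hs) hzero
  refine ⟨prox_eq_zero_of_abs_le hγ.le hlin hzero hp, fun hgt => ?_⟩
  have hne : p ≠ 0 := by
    rintro rfl
    exact hgt.not_ge (abs_le_of_prox_eq_zero heven hzero hd hp)
  have hsign : 0 ≤ α * p := mul_nonneg_of_prox heven hp
  exact ⟨hne, fun hα => (nonneg_of_mul_nonneg_right hsign hα).lt_of_ne' hne,
    fun hα => (nonpos_of_mul_nonneg_right hsign hα).lt_of_ne hne,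
    prox_eq_sub_of_hasDerivAt (hdiff p hne) hp⟩

/-- For a convex, even, nonnegative penalty `ψ`, nondecreasing on `[0,∞)`,
with `ψ(0) = 0`, differentiable away from `0`, and positive right derivative
`d = ψ'₊(0) > 0` at `0`: the prox `p = prox_{γψ}(α)` satisfies `p = 0` when
`|α| ≤ γd`, and otherwise `p ≠ 0`, has the same sign as `α`, and
`p = α − γ ψ'(p)`. -/
theorem prox_sparsity_penalty_thresholding
    (ψ : ℝ → ℝ) (ψ' : ℝ → ℝ) (d : ℝ)
    (hconv : ConvexOn ℝ Set.univ ψ)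
    (heven : ∀ t, ψ (-t) = ψ t)
    (hnonneg : ∀ t, 0 ≤ ψ t)
    (hmono : MonotoneOn ψ (Set.Ici (0 : ℝ)))
    (hzero : ψ 0 = 0)
    (hcont : Continuous ψ)
    (hdiff : ∀ t : ℝ, t ≠ 0 → HasDerivAt ψ (ψ' t) t)
    (hd : Filter.Tendsto (fun h : ℝ => ψ h / h) (nhdsWithin 0 (Set.Ioi 0)) (nhds d))
    (hdpos : 0 < d)
    (γ : ℝ) (hγ : 0 < γ)
    (α p : ℝ)
    -- `p = prox_{γψ}(α)`:
    (hp : ∀ t : ℝ, γ * ψ p + (α - p) ^ 2 / 2 ≤ γ * ψ t + (α - t) ^ 2 / 2) :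
    (|α| ≤ γ * d → p = 0)
    ∧ (γ * d < |α| →
        p ≠ 0 ∧ (0 < α → 0 < p) ∧ (α < 0 → p < 0) ∧ p = α - γ * ψ' p) :=
  prox_sparsity_penalty_thresholding_general ψ ψ' d hconv heven hzero hdiff hd γ hγ α p hp
end
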